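/- arXiv:1211.1703 — 2 statements merged into one kernel-verified Lean document; each statement's English description precedes it below -/
import Mathlib

section
/- Let n ≥ 2, let c_1,…,c_n be positive integers, define d_i = 2^{n+1}·(c_i + Σ_{j=1}^n c_j) + 2^i for i ∈ [n] and d_{n+1} = 1, and let cost(R) = Σ_{i∈[n+1]∖R} d_i for R ⊆ [n+1]. Let 1 ≤ s ≤ n−1 and let k be an integer with 1 ≤ k ≤ C(n,s). Among the subsets T ⊆ [n] of size n−s (whose costs are pairwise distinct), let T* be the one with the k-th smallest cost and set c* = cost(T*). Let p ∈ [1/2, 1 − 1/(2n+2)), and for R ⊊ [n+1] set cap(R) = p^{|R|}·(1−p)^{n+1−|R|}·(2n+1 − 2|R|), and set supply = p^{n+1}. If f(p) ∈ ( k − 1/(2n+2), k ), then Σ_{R⊊[n+1]: cost(R)<c*} cap(R) < supply < Σ_{R⊊[n+1]: cost(R)≤c*} cap(R). -/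
open Finset
open scoped BigOperators Classical

/-- `d i = 2^(n+1) · (c i + Σ_{j=1}^n c j) + 2^i` for `i ∈ [n]`, and `d (n+1) = 1`. -/
def dFull (n : ℕ) (c : ℕ → ℕ) : ℕ → ℕ :=
  fun i => if i = n + 1 then 1
    else 2 ^ (n + 1) * (c i + ∑ j ∈ Finset.Icc 1 n, c j) + 2 ^ i

/-- `cost(R) = Σ_{i ∈ [n+1] ∖ R} d i`. -/
def cost (n : ℕ) (c : ℕ → ℕ) (R : Finset ℕ) : ℕ :=
  ∑ i ∈ Finset.Icc 1 (n + 1) \ R, dFull n c i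

/-- The function `f(p)` from the choice-of-parameter lemma. -/
noncomputable def ffun (n s : ℕ) (p : ℝ) : ℝ :=
  (∑ i ∈ Finset.Icc (n - s + 1) n,
      (n.choose i : ℝ) * p ^ i * (1 - p) ^ (n - i) * (2 * ((i : ℝ) + p - n) - 1)) /
    (p ^ (n - s) * (1 - p) ^ s * (2 * (s : ℝ) - 2 * p + 1))

/-- The absorption capacity `cap(R) = p^{|R|}·(1-p)^{n+1-|R|}·(2n+1-2|R|)`. -/
noncomputable def cap (n : ℕ) (p : ℝ) (R : Finset ℕ) : ℝ :=
  p ^ R.card * (1 - p) ^ (n + 1 - R.card) * (2 * (n : ℝ) + 1 - 2 * (R.card : ℝ))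

/-! On subsets of `[n]` the cost is decided first by cardinality (the `2^(n+1)·(c_i + Σ c_j)` part
of `d_i`) and then injectively by the binary digits `2^i`, while adding `n + 1` lowers the cost by
one and so flips its parity. Hence `{R | cost R ≤ c*}` consists of the `T ⊆ [n]` with `|T| > n - s`,
the `k` sets of size `n - s` of cost at most `c*`, and the sets `T ∪ {n + 1}` for all these `T`;
`{R | cost R < c*}` loses only `T*`. Pairing `T` with `T ∪ {n + 1}` and counting by cardinality, the
capacities add up to `k·D - N` and `k·D - N - cap T*`, where `f(p) = N / D`. Since
`cap [n+1] = -supply`, the claim becomes `k·D - N - cap T* < 0 < k·D - N`, which follows from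
`k - ε < f(p) < k` and `ε·D ≤ cap T*` for `ε = 1/(2n+2) ≤ 1 - p`. -/

section Costs

variable {n : ℕ} {c : ℕ → ℕ} {S S' T T' : Finset ℕ}

def dSum (n : ℕ) (c : ℕ → ℕ) (S : Finset ℕ) : ℕ := ∑ i ∈ S, dFull n c i

lemma dFull_of_mem {i : ℕ} (hi : i ∈ Icc 1 n) :
    dFull n c i = 2 ^ (n + 1) * (c i + ∑ j ∈ Icc 1 n, c j) + 2 ^ i := by
  rw [mem_Icc] at hi
  rw [dFull, if_neg (by omega)]

lemma sum_two_pow_lt (hS : S ⊆ Icc 1 n) : ∑ i ∈ S, 2 ^ i < 2 ^ (n + 1) :=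
  Nat.geomSum_lt le_rfl fun i hi => by have := mem_Icc.1 (hS hi); omega

lemma dSum_eq (hS : S ⊆ Icc 1 n) :
    dSum n c S = 2 ^ (n + 1) * ∑ i ∈ S, (c i + ∑ j ∈ Icc 1 n, c j) + ∑ i ∈ S, 2 ^ i := by
  rw [dSum, mul_sum, ← sum_add_distrib]
  exact sum_congr rfl fun i hi => dFull_of_mem (hS hi)

lemma two_dvd_dSum (hS : S ⊆ Icc 1 n) : 2 ∣ dSum n c S :=
  dvd_sum fun i hi => by
    have hi1 : 1 ≤ i := (mem_Icc.1 (hS hi)).1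
    rw [dFull_of_mem (hS hi)]
    exact dvd_add (dvd_mul_of_dvd_left (dvd_pow_self 2 n.succ_ne_zero) _)
      (dvd_pow_self 2 (by omega))

lemma dSum_mod_two_pow (hS : S ⊆ Icc 1 n) : dSum n c S % 2 ^ (n + 1) = ∑ i ∈ S, 2 ^ i := by
  rw [dSum_eq hS, Nat.mul_add_mod, Nat.mod_eq_of_lt (sum_two_pow_lt hS)]

lemma eq_of_dSum_eq (hS : S ⊆ Icc 1 n) (hS' : S' ⊆ Icc 1 n) (h : dSum n c S = dSum n c S') :
    S = S' :=
  geomSum_injective le_rfl <| show ∑ i ∈ S, 2 ^ i = ∑ i ∈ S', 2 ^ i by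
    rw [← dSum_mod_two_pow hS, ← dSum_mod_two_pow hS', h]

lemma dSum_lt_succ_card_mul (hS : S ⊆ Icc 1 n) :
    dSum n c S < (#S + 1) * (2 ^ (n + 1) * (1 + ∑ j ∈ Icc 1 n, c j)) := by
  have hc : ∑ i ∈ S, c i ≤ ∑ j ∈ Icc 1 n, c j := sum_le_sum_of_subset hS
  have h2 := sum_two_pow_lt hS
  rw [dSum_eq hS, sum_add_distrib, sum_const, smul_eq_mul]
  nlinarith [Nat.mul_le_mul_left (2 ^ (n + 1)) hc, Nat.zero_le (#S * 2 ^ (n + 1))]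

lemma card_mul_le_dSum (hc : ∀ i ∈ Icc 1 n, 0 < c i) (hS : S ⊆ Icc 1 n) :
    #S * (2 ^ (n + 1) * (1 + ∑ j ∈ Icc 1 n, c j)) ≤ dSum n c S :=
  card_nsmul_le_sum S _ _ fun i hi => by
    have hci := hc i (hS hi)
    rw [dFull_of_mem (hS hi)]
    exact le_add_right (Nat.mul_le_mul_left _ (by omega))

lemma dSum_lt_dSum_of_card_lt (hc : ∀ i ∈ Icc 1 n, 0 < c i) (hS : S ⊆ Icc 1 n)
    (hS' : S' ⊆ Icc 1 n) (h : #S < #S') : dSum n c S < dSum n c S' :=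
  (dSum_lt_succ_card_mul hS).trans_le <|
    (Nat.mul_le_mul_right _ h).trans (card_mul_le_dSum hc hS')

lemma cost_eq_dSum_add_one (hT : T ⊆ Icc 1 n) :
    cost n c T = dSum n c (Icc 1 n \ T) + 1 := by
  have hnT : n + 1 ∉ T := fun h => by simpa using hT h
  have hdiff : Icc 1 (n + 1) \ T = insert (n + 1) (Icc 1 n \ T) := by
    rw [← insert_Icc_right_eq_Icc_add_one (by omega), insert_sdiff_of_notMem _ hnT]
  rw [cost, hdiff, sum_insert (by simp), dFull, if_pos rfl, dSum, add_comm]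

lemma cost_insert_eq_dSum (T : Finset ℕ) :
    cost n c (insert (n + 1) T) = dSum n c (Icc 1 n \ T) := by
  rw [cost, ← insert_Icc_right_eq_Icc_add_one (by omega), insert_sdiff_insert,
    sdiff_insert_of_notMem (by simp), dSum]

lemma cost_lt_cost_of_card_lt (hc : ∀ i ∈ Icc 1 n, 0 < c i) (hT : T ⊆ Icc 1 n)
    (hT' : T' ⊆ Icc 1 n) (h : #T' < #T) : cost n c T < cost n c T' := by
  rw [cost_eq_dSum_add_one hT, cost_eq_dSum_add_one hT', add_lt_add_iff_right]
  refine dSum_lt_dSum_of_card_lt hc sdiff_subset sdiff_subset ?_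
  rw [card_sdiff_of_subset hT, card_sdiff_of_subset hT']
  have := card_le_card hT
  omega

lemma eq_of_cost_eq (hT : T ⊆ Icc 1 n) (hT' : T' ⊆ Icc 1 n) (h : cost n c T = cost n c T') :
    T = T' := by
  rw [cost_eq_dSum_add_one hT, cost_eq_dSum_add_one hT', add_left_inj] at h
  have := congrArg (Icc 1 n \ ·) (eq_of_dSum_eq sdiff_subset sdiff_subset h)
  rwa [Finset.sdiff_sdiff_eq_self hT, Finset.sdiff_sdiff_eq_self hT'] at this

lemma cost_Icc : cost n c (Icc 1 (n + 1)) = 0 := by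
  simp [cost]

-- `cost (insert (n + 1) T) = cost T - 1` is even while `cost T'` is odd.
lemma cost_insert_le_iff (hT : T ⊆ Icc 1 n) (hT' : T' ⊆ Icc 1 n) :
    cost n c (insert (n + 1) T) ≤ cost n c T' ↔ cost n c T ≤ cost n c T' := by
  rw [cost_insert_eq_dSum T, cost_eq_dSum_add_one hT, cost_eq_dSum_add_one hT']
  have := two_dvd_dSum (c := c) (sdiff_subset (s := Icc 1 n) (t := T))
  have := two_dvd_dSum (c := c) (sdiff_subset (s := Icc 1 n) (t := T'))
  omega

lemma cost_insert_lt_iff (hT : T ⊆ Icc 1 n) (hT' : T' ⊆ Icc 1 n) :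
    cost n c (insert (n + 1) T) < cost n c T' ↔ cost n c T ≤ cost n c T' := by
  rw [← cost_insert_le_iff hT hT', cost_insert_eq_dSum T, cost_eq_dSum_add_one hT']
  have := two_dvd_dSum (c := c) (sdiff_subset (s := Icc 1 n) (t := T))
  have := two_dvd_dSum (c := c) (sdiff_subset (s := Icc 1 n) (t := T'))
  omega

lemma cost_le_cost_iff (hc : ∀ i ∈ Icc 1 n, 0 < c i) (hT : T ⊆ Icc 1 n) (hT' : T' ⊆ Icc 1 n) :
    cost n c T ≤ cost n c T' ↔ #T' < #T ∨ (#T = #T' ∧ cost n c T ≤ cost n c T') := by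
  refine ⟨fun h => ?_, ?_⟩
  · rcases lt_trichotomy #T #T' with hlt | heq | hgt
    · exact absurd h (cost_lt_cost_of_card_lt hc hT' hT hlt).not_ge
    · exact Or.inr ⟨heq, h⟩
    · exact Or.inl hgt
  · rintro (h | ⟨-, h⟩)
    exacts [(cost_lt_cost_of_card_lt hc hT hT' h).le, h]

lemma cost_lt_cost_iff (hT : T ⊆ Icc 1 n) (hT' : T' ⊆ Icc 1 n) :
    cost n c T < cost n c T' ↔ T ≠ T' ∧ cost n c T ≤ cost n c T' := by
  rw [lt_iff_le_and_ne, and_comm]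
  exact and_congr_left fun _ => ⟨fun h he => h (he ▸ rfl), fun h he => h (eq_of_cost_eq hT hT' he)⟩

end Costs

section Counting

variable {α M : Type*} [AddCommMonoid M]

lemma sum_powerset_filter_lt_card (s : Finset α) (m : ℕ) (F : ℕ → M) :
    ∑ T ∈ s.powerset with m < #T, F #T = ∑ j ∈ Ioc m #s, (#s).choose j • F j := by
  rw [sum_filter, sum_powerset_apply_card (fun j => if m < j then F j else 0)]
  simp only [smul_ite, smul_zero]
  rw [← sum_filter]
  congr 1
  ext j
  simp only [mem_filter, mem_range, mem_Ioc]
  omega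

lemma sum_powerset_filter_lt_card_or (s : Finset α) (m : ℕ) (Q : Finset α → Prop)
    [DecidablePred Q] (F : ℕ → M) :
    ∑ T ∈ s.powerset with m < #T ∨ (#T = m ∧ Q T), F #T =
      ∑ j ∈ Ioc m #s, (#s).choose j • F j + #{T ∈ s.powerset | #T = m ∧ Q T} • F m := by
  rw [filter_or, sum_union, sum_powerset_filter_lt_card, ← sum_const]
  · exact congrArg _ (sum_congr rfl fun T hT => by rw [(mem_filter.1 hT).2.1])
  · exact disjoint_filter.2 fun T _ h h' => h.ne' h'.1

lemma sum_filter_ne_and {G : Type*} [AddCommGroup G] [DecidableEq α] {a : α} {s : Finset α}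
    {P : α → Prop} [DecidablePred P] (f : α → G) (ha : a ∈ s) (hP : P a) :
    ∑ x ∈ s with x ≠ a ∧ P x, f x = ∑ x ∈ s with P x, f x - f a := by
  rw [← sum_erase_eq_sub (mem_filter.2 ⟨ha, hP⟩), ← filter_ne', filter_filter]
  exact sum_congr (filter_congr fun _ _ => and_comm) fun _ _ => rfl

lemma sum_powerset_Icc_add_one_filter {n : ℕ} (P : Finset ℕ → Prop) [DecidablePred P]
    (g : Finset ℕ → M) :
    ∑ R ∈ (Icc 1 (n + 1)).powerset with P R, g R =
      ∑ T ∈ (Icc 1 n).powerset with P T, g T +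
        ∑ T ∈ (Icc 1 n).powerset with P (insert (n + 1) T), g (insert (n + 1) T) := by
  simp only [sum_filter]
  rw [← insert_Icc_right_eq_Icc_add_one (by omega), sum_powerset_insert (by simp)]

end Counting

section Capacity

variable {n : ℕ} {p : ℝ}

noncomputable def capPair (n : ℕ) (p : ℝ) (j : ℕ) : ℝ :=
  p ^ j * (1 - p) ^ (n - j) * (2 * n + 1 - 2 * j - 2 * p)

lemma cap_add_cap_insert {a : ℕ} {T : Finset ℕ} (ha : a ∉ T) (hT : #T ≤ n) :
    cap n p T + cap n p (insert a T) = capPair n p #T := by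
  obtain ⟨k, hk⟩ := Nat.exists_eq_add_of_le hT
  rw [cap, cap, capPair, card_insert_of_notMem ha, hk, show #T + k + 1 - #T = k + 1 by omega,
    show #T + k + 1 - (#T + 1) = k by omega, Nat.add_sub_cancel_left]
  push_cast
  ring

lemma cap_Icc : cap n p (Icc 1 (n + 1)) = -p ^ (n + 1) := by
  simp only [cap, Nat.card_Icc, add_tsub_cancel_right, tsub_self, pow_zero, mul_one,
    Nat.cast_add, Nat.cast_one]
  ring

lemma ffun_eq {s : ℕ} (hs : s ≤ n) :
    ffun n s p =
      -(∑ j ∈ Ioc (n - s) n, (n.choose j : ℝ) * capPair n p j) / capPair n p (n - s) := by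
  rw [ffun, ← Icc_add_one_left_eq_Ioc, ← sum_neg_distrib]
  congr 1
  · refine sum_congr rfl fun j _ => ?_
    rw [capPair]
    ring
  · rw [capPair, Nat.sub_sub_self hs, Nat.cast_sub hs]
    ring

lemma capPair_pos {j : ℕ} (hp₀ : 0 < p) (hp₁ : p < 1) (hj : j < n) : 0 < capPair n p j := by
  have hj' : (j : ℝ) + 1 ≤ n := by exact_mod_cast hj
  have hp₁' : 0 < 1 - p := by linarith
  exact mul_pos (by positivity) (by linarith)

lemma mul_capPair_le_cap {ε : ℝ} {R : Finset ℕ} (hp₀ : 0 ≤ p) (hε : 0 ≤ ε) (hεp : ε ≤ 1 - p)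
    (hR : #R ≤ n) : ε * capPair n p #R ≤ cap n p R := by
  obtain ⟨k, hk⟩ := Nat.exists_eq_add_of_le hR
  have hp₁ : 0 ≤ 1 - p := by linarith
  have hpk : 0 ≤ p ^ #R * (1 - p) ^ k := by positivity
  have hfactor : ε * (2 * k + 1 - 2 * p) ≤ (1 - p) * (2 * k + 1) := by nlinarith
  calc ε * capPair n p #R = p ^ #R * (1 - p) ^ k * (ε * (2 * k + 1 - 2 * p)) := by
        rw [capPair, hk, Nat.add_sub_cancel_left]; push_cast; ring
    _ ≤ p ^ #R * (1 - p) ^ k * ((1 - p) * (2 * k + 1)) := mul_le_mul_of_nonneg_left hfactor hpk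
    _ = cap n p R := by
        rw [cap, hk, show #R + k + 1 - #R = k + 1 by omega]; push_cast; ring

end Capacity

section Sums

variable {n : ℕ} {c : ℕ → ℕ} {p : ℝ} {T' : Finset ℕ}

lemma sum_cap_filter_cost_le (hc : ∀ i ∈ Icc 1 n, 0 < c i) (hT' : T' ⊆ Icc 1 n) :
    ∑ R ∈ (Icc 1 (n + 1)).powerset with cost n c R ≤ cost n c T', cap n p R =
      ∑ j ∈ Ioc #T' n, (n.choose j : ℝ) * capPair n p j +
        #{T ∈ (Icc 1 n).powerset | #T = #T' ∧ cost n c T ≤ cost n c T'} * capPair n p #T' := by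
  have hpair (T : Finset ℕ) (hT : T ⊆ Icc 1 n) :
      cap n p T + cap n p (insert (n + 1) T) = capPair n p #T :=
    cap_add_cap_insert (fun h => by simpa using hT h) (by simpa using card_le_card hT)
  rw [sum_powerset_Icc_add_one_filter,
    filter_congr fun T hT => cost_insert_le_iff (mem_powerset.1 hT) hT', ← sum_add_distrib,
    sum_congr rfl fun T hT => hpair T (mem_powerset.1 (mem_filter.1 hT).1),
    filter_congr fun T hT => cost_le_cost_iff hc (mem_powerset.1 hT) hT',
    sum_powerset_filter_lt_card_or, Nat.card_Icc, Nat.add_sub_cancel]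
  simp only [nsmul_eq_mul]

lemma sum_cap_filter_cost_lt (hT' : T' ⊆ Icc 1 n) :
    ∑ R ∈ (Icc 1 (n + 1)).powerset with cost n c R < cost n c T', cap n p R =
      ∑ R ∈ (Icc 1 (n + 1)).powerset with cost n c R ≤ cost n c T', cap n p R - cap n p T' := by
  rw [sum_powerset_Icc_add_one_filter, sum_powerset_Icc_add_one_filter,
    filter_congr fun T hT => cost_insert_lt_iff (mem_powerset.1 hT) hT',
    filter_congr fun T hT => cost_insert_le_iff (mem_powerset.1 hT) hT',
    filter_congr fun T hT => cost_lt_cost_iff (mem_powerset.1 hT) hT',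
    sum_filter_ne_and (P := fun T => cost n c T ≤ cost n c T') _ (mem_powerset.2 hT') le_rfl,
    sub_add_eq_add_sub]

end Sums

theorem stmt_13_general (n s k : ℕ) (c : ℕ → ℕ)
    (hc : ∀ i ∈ Finset.Icc 1 n, 0 < c i)
    (hs1 : 1 ≤ s) (hsn : s ≤ n - 1)
    (Tstar : Finset ℕ) (hTsub : Tstar ⊆ Finset.Icc 1 n) (hTcard : Tstar.card = n - s)
    (hkth : (((Finset.Icc 1 n).powerset).filter
        (fun T : Finset ℕ => T.card = n - s ∧ cost n c T ≤ cost n c Tstar)).card = k)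
    (p : ℝ) (hp : p ∈ Set.Ico (1 / 2 : ℝ) (1 - 1 / (2 * (n : ℝ) + 2)))
    (hf : ffun n s p ∈ Set.Ioo ((k : ℝ) - 1 / (2 * (n : ℝ) + 2)) (k : ℝ)) :
    ∑ R ∈ ((Finset.Icc 1 (n + 1)).powerset).filter
        (fun R : Finset ℕ => R ≠ Finset.Icc 1 (n + 1) ∧ cost n c R < cost n c Tstar),
        cap n p R
      < p ^ (n + 1) ∧
    p ^ (n + 1)
      < ∑ R ∈ ((Finset.Icc 1 (n + 1)).powerset).filter
          (fun R : Finset ℕ => R ≠ Finset.Icc 1 (n + 1) ∧ cost n c R ≤ cost n c Tstar),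
          cap n p R := by
  obtain ⟨hp₀, hp₁⟩ := hp
  have hε : 0 < 1 / (2 * (n : ℝ) + 2) := by positivity
  have hD : 0 < capPair n p (n - s) := capPair_pos (by linarith) (by linarith) (by omega)
  have hsum_le := sum_cap_filter_cost_le (p := p) hc hTsub
  rw [hTcard, hkth] at hsum_le
  have hcap : 1 / (2 * (n : ℝ) + 2) * capPair n p (n - s) ≤ cap n p Tstar := by
    rw [← hTcard]
    exact mul_capPair_le_cap (by linarith) hε.le (by linarith) (by omega)
  have hU : cost n c (Icc 1 (n + 1)) < cost n c Tstar := by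
    rw [cost_Icc, cost_eq_dSum_add_one hTsub]
    exact Nat.succ_pos _
  rw [ffun_eq (by omega), Set.mem_Ioo, lt_div_iff₀ hD, div_lt_iff₀ hD] at hf
  rw [sum_filter_ne_and _ (mem_powerset_self _) hU,
    sum_filter_ne_and _ (mem_powerset_self _) hU.le, sum_cap_filter_cost_lt hTsub, hsum_le, cap_Icc]
  constructor <;> linarith

theorem stmt_13 (n s k : ℕ) (c : ℕ → ℕ) (hn : 2 ≤ n)
    (hc : ∀ i ∈ Finset.Icc 1 n, 0 < c i)
    (hs1 : 1 ≤ s) (hsn : s ≤ n - 1) (hk1 : 1 ≤ k) (hk : k ≤ n.choose s)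
    (Tstar : Finset ℕ) (hTsub : Tstar ⊆ Finset.Icc 1 n) (hTcard : Tstar.card = n - s)
    (hkth : (((Finset.Icc 1 n).powerset).filter
        (fun T : Finset ℕ => T.card = n - s ∧ cost n c T ≤ cost n c Tstar)).card = k)
    (p : ℝ) (hp : p ∈ Set.Ico (1 / 2 : ℝ) (1 - 1 / (2 * (n : ℝ) + 2)))
    (hf : ffun n s p ∈ Set.Ioo ((k : ℝ) - 1 / (2 * (n : ℝ) + 2)) (k : ℝ)) :
    ∑ R ∈ ((Finset.Icc 1 (n + 1)).powerset).filter
        (fun R : Finset ℕ => R ≠ Finset.Icc 1 (n + 1) ∧ cost n c R < cost n c Tstar),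
        cap n p R
      < p ^ (n + 1) ∧
    p ^ (n + 1)
      < ∑ R ∈ ((Finset.Icc 1 (n + 1)).powerset).filter
          (fun R : Finset ℕ => R ≠ Finset.Icc 1 (n + 1) ∧ cost n c R ≤ cost n c Tstar),
          cap n p R :=
  stmt_13_general n s k c hc hs1 hsn Tstar hTsub hTcard hkth p hp hf
end

section
/- Let n ≥ 2, let c_1,…,c_n be positive integers, define d_i = 2^{n+1}·(c_i + Σ_{j=1}^n c_j) + 2^i for i ∈ [n] and d_{n+1} = 1, and let cost(R) = Σ_{i∈[n+1]∖R} d_i for R ⊆ [n+1]. Let S ⊆ [n] be nonempty with S ≠ [n], let T* ⊆ [n] with |T*| = n − |S|, and define u(R) = max{ cost(T*) − cost(R), 0 } for R ⊆ [n+1]. Let S^c = [n] ∖ S. Then u(S^c ∪ {n+1}) − u(S^c) = 1 if lexr_𝔠(S) ≤ lexr_𝔠([n] ∖ T*), and u(S^c ∪ {n+1}) − u(S^c) = 0 otherwise, where 𝔠 = (c_1,…,c_n). -/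
open Finset
open scoped BigOperators Classical

/-- `u(R) = max{ cost(T*) − cost(R), 0 }`. -/
noncomputable def uFun (n : ℕ) (c : ℕ → ℕ) (Tstar R : Finset ℕ) : ℝ :=
  max ((cost n c Tstar : ℝ) - (cost n c R : ℝ)) 0

/-- `S' ≤_lex S`: either `S' = S` or the largest element of the symmetric
difference `S' △ S` lies in `S`. -/
def lexLe (S' S : Finset ℕ) : Prop :=
  S' = S ∨ ∃ m ∈ (S' \ S) ∪ (S \ S'), m ∈ S ∧ ∀ b ∈ (S' \ S) ∪ (S \ S'), b ≤ m

/-- The lexicographic rank of `S` among the subsets of `ground`, with respect to the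
weights `c`. -/
noncomputable def lexrank (c : ℕ → ℕ) (ground S : Finset ℕ) : ℕ :=
  (ground.powerset.filter (fun S' : Finset ℕ =>
    S'.card = S.card ∧
      (∑ i ∈ S', c i < ∑ i ∈ S, c i ∨
        (∑ i ∈ S', c i = ∑ i ∈ S, c i ∧ lexLe S' S)))).card

/-!
For `A ⊆ [n]` of fixed size, `Σ_{i∈A} d_i = 2^(n+1) (Σ_{i∈A} c_i + |A| Σ_j c_j) + Σ_{i∈A} 2^i` with
`Σ_{i∈A} 2^i < 2^(n+1)`, so comparing these sums compares `Σ_{i∈A} c_i` first and then the binary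
numbers `Σ_{i∈A} 2^i`, i.e. the colex order, which is `≤_lex`. Hence
`lexr(S) ≤ lexr([n] ∖ T*)` iff `d(S) ≤ d([n] ∖ T*)`. Since `cost(T*) = d([n] ∖ T*) + 1`,
`cost(Sᶜ) = d(S) + 1` and `cost(Sᶜ ∪ {n+1}) = d(S)`, the two truncated differences differ by `1`
exactly in that case.
-/

open Finset.Colex Finset.Nat

lemma lexLe_iff_toColex_le {S' S : Finset ℕ} : lexLe S' S ↔ toColex S' ≤ toColex S := by
  rw [toColex_le_toColex_iff_max'_mem, lexLe, ← sup_eq_union, ← symmDiff_def]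
  by_cases h : S' = S
  · simp [h]
  · simp only [h, false_or, ne_eq, not_false_eq_true, forall_true_left]
    constructor
    · rintro ⟨m, hm, hmS, hmax⟩
      rwa [le_antisymm (max'_le _ _ _ hmax) (le_max' _ _ hm)]
    · exact fun hmax => ⟨_, max'_mem _ _, hmax, fun b hb => le_max' _ b hb⟩

def lexKey (c : ℕ → ℕ) (A : Finset ℕ) : ℕ ×ₗ Colex (Finset ℕ) :=
  toLex (∑ i ∈ A, c i, toColex A)

lemma lexrank_eq_card_filter_lexKey_le (c : ℕ → ℕ) (G S : Finset ℕ) :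
    lexrank c G S = #{S' ∈ G.powersetCard #S | lexKey c S' ≤ lexKey c S} := by
  rw [lexrank, powersetCard_eq_filter, filter_filter]
  simp only [lexKey, Prod.Lex.toLex_le_toLex, lexLe_iff_toColex_le]

lemma card_filter_le_le_card_filter_le_iff {α β : Type*} [LinearOrder β] {U : Finset α}
    (f : α → β) {a b : α} (ha : a ∈ U) :
    #{x ∈ U | f x ≤ f a} ≤ #{x ∈ U | f x ≤ f b} ↔ f a ≤ f b := by
  refine ⟨fun h => ?_, fun h => card_le_card (monotone_filter_right _ fun _ _ hx => hx.trans h)⟩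
  by_contra! hba
  refine h.not_gt (card_lt_card ?_)
  rw [ssubset_iff_of_subset (monotone_filter_right _ fun _ _ hx => hx.trans hba.le)]
  exact ⟨a, mem_filter.2 ⟨ha, le_rfl⟩, fun hx => hba.not_ge (mem_filter.1 hx).2⟩

lemma lexrank_le_lexrank_iff (c : ℕ → ℕ) {G S T : Finset ℕ} (hS : S ⊆ G)
    (hcard : #S = #T) : lexrank c G S ≤ lexrank c G T ↔ lexKey c S ≤ lexKey c T := by
  rw [lexrank_eq_card_filter_lexKey_le, lexrank_eq_card_filter_lexKey_le, ← hcard]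
  exact card_filter_le_le_card_filter_le_iff _ (mem_powersetCard.2 ⟨hS, rfl⟩)

lemma mul_add_le_mul_add_iff {M a b r s : ℕ} (hr : r < M) (hs : s < M) :
    M * a + r ≤ M * b + s ↔ a < b ∨ a = b ∧ r ≤ s := by
  have step {x y : ℕ} (hxy : x < y) : M * x + M ≤ M * y := by
    simpa [Nat.mul_succ] using Nat.mul_le_mul_left M hxy
  rcases lt_trichotomy a b with h | rfl | h
  · simp only [h, true_or, iff_true]
    have := step h
    omega
  · simp
  · have := step h
    simp only [h.not_gt, h.ne', false_and, or_self, iff_false]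
    omega

lemma sum_dFull_of_subset {n : ℕ} (c : ℕ → ℕ) {A : Finset ℕ} (hA : A ⊆ Icc 1 n) :
    ∑ i ∈ A, dFull n c i
      = 2 ^ (n + 1) * (∑ i ∈ A, c i + #A * ∑ j ∈ Icc 1 n, c j) + ∑ i ∈ A, 2 ^ i := by
  have hd : ∀ i ∈ A, dFull n c i
      = 2 ^ (n + 1) * c i + 2 ^ (n + 1) * ∑ j ∈ Icc 1 n, c j + 2 ^ i := fun i hi => by
    have := (mem_Icc.1 (hA hi)).2
    rw [dFull, if_neg (by omega)]
    ring
  rw [sum_congr rfl hd]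
  simp only [sum_add_distrib, ← mul_sum, sum_const, smul_eq_mul]
  ring

lemma sum_dFull_le_sum_dFull_iff {n : ℕ} (c : ℕ → ℕ) {A B : Finset ℕ}
    (hA : A ⊆ Icc 1 n) (hB : B ⊆ Icc 1 n) (hcard : #A = #B) :
    ∑ i ∈ A, dFull n c i ≤ ∑ i ∈ B, dFull n c i ↔ lexKey c A ≤ lexKey c B := by
  have geom_lt {X : Finset ℕ} (hX : X ⊆ Icc 1 n) : ∑ i ∈ X, 2 ^ i < 2 ^ (n + 1) :=
    Nat.geomSum_lt le_rfl fun i hi => Nat.lt_succ_of_le (mem_Icc.1 (hX hi)).2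
  rw [sum_dFull_of_subset c hA, sum_dFull_of_subset c hB, hcard,
    mul_add_le_mul_add_iff (geom_lt hA) (geom_lt hB), lexKey, lexKey, Prod.Lex.toLex_le_toLex,
    ← geomSum_le_geomSum_iff_toColex_le_toColex le_rfl]
  simp only [Nat.add_lt_add_iff_right, Nat.add_right_cancel_iff]

lemma Icc_one_succ_eq_insert (n : ℕ) : Icc 1 (n + 1) = insert (n + 1) (Icc 1 n) := by
  ext; simp only [mem_Icc, mem_insert]; omega

lemma cost_of_subset {n : ℕ} (c : ℕ → ℕ) {R : Finset ℕ} (hR : R ⊆ Icc 1 n) :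
    cost n c R = ∑ i ∈ Icc 1 n \ R, dFull n c i + 1 := by
  have hnR : n + 1 ∉ R := fun h => by simpa using (mem_Icc.1 (hR h)).2
  rw [cost, Icc_one_succ_eq_insert, insert_sdiff_of_notMem _ hnR,
    sum_insert fun h => by simpa using (mem_Icc.1 (mem_sdiff.1 h).1).2, add_comm, dFull, if_pos rfl]

lemma cost_insert_succ (n : ℕ) (c : ℕ → ℕ) (R : Finset ℕ) :
    cost n c (insert (n + 1) R) = ∑ i ∈ Icc 1 n \ R, dFull n c i := by
  rw [cost, Icc_one_succ_eq_insert, insert_sdiff_insert, sdiff_insert_of_notMem (by simp)]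

lemma max_sub_max_sub_succ (a b : ℕ) :
    max ((a + 1 : ℝ) - b) 0 - max ((a + 1 : ℝ) - (b + 1)) 0 = if b ≤ a then 1 else 0 := by
  split_ifs with h
  · have : (b : ℝ) ≤ a := by exact_mod_cast h
    rw [max_eq_left (by linarith), max_eq_left (by linarith)]
    ring
  · have : (a : ℝ) + 1 ≤ b := by exact_mod_cast (by omega : a + 1 ≤ b)
    rw [max_eq_right (by linarith), max_eq_right (by linarith)]
    ring

theorem stmt_14_general (n : ℕ) (c : ℕ → ℕ)
    (S : Finset ℕ) (hSsub : S ⊆ Finset.Icc 1 n)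
    (Tstar : Finset ℕ) (hTsub : Tstar ⊆ Finset.Icc 1 n)
    (hTcard : Tstar.card = n - S.card) :
    uFun n c Tstar (insert (n + 1) (Finset.Icc 1 n \ S))
        - uFun n c Tstar (Finset.Icc 1 n \ S)
      = if lexrank c (Finset.Icc 1 n) S
            ≤ lexrank c (Finset.Icc 1 n) (Finset.Icc 1 n \ Tstar)
        then 1 else 0 := by
  have hcard : #S = #(Icc 1 n \ Tstar) := by
    have := card_le_card hSsub
    rw [Nat.card_Icc] at this
    rw [card_sdiff_of_subset hTsub, hTcard, Nat.card_Icc]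
    omega
  have hrank := (lexrank_le_lexrank_iff c hSsub hcard).trans
    (sum_dFull_le_sum_dFull_iff c hSsub sdiff_subset hcard).symm
  rw [uFun, uFun, cost_of_subset c hTsub, cost_insert_succ,
    cost_of_subset c sdiff_subset, Finset.sdiff_sdiff_eq_self hSsub]
  simp only [Nat.cast_add, Nat.cast_one]
  rw [max_sub_max_sub_succ]
  exact if_congr hrank.symm rfl rfl

theorem stmt_14 (n : ℕ) (hn : 2 ≤ n) (c : ℕ → ℕ)
    (hc : ∀ i ∈ Finset.Icc 1 n, 0 < c i)
    (S : Finset ℕ) (hSsub : S ⊆ Finset.Icc 1 n) (hSne : S.Nonempty)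
    (hSproper : S ≠ Finset.Icc 1 n)
    (Tstar : Finset ℕ) (hTsub : Tstar ⊆ Finset.Icc 1 n)
    (hTcard : Tstar.card = n - S.card) :
    uFun n c Tstar (insert (n + 1) (Finset.Icc 1 n \ S))
        - uFun n c Tstar (Finset.Icc 1 n \ S)
      = if lexrank c (Finset.Icc 1 n) S
            ≤ lexrank c (Finset.Icc 1 n) (Finset.Icc 1 n \ Tstar)
        then 1 else 0 :=
  stmt_14_general n c S hSsub Tstar hTsub hTcard
end
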